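/- Let D be a dimension function satisfying the regularized Boltzmann entropy hypothesis with S̃ strictly increasing in each coordinate, and let a, a' ∈ ℝ^{L+1} with a > 0 and a' > 0. Suppose S̃ a > S̃ a' and set s := S̃ a − S̃ a' > 0. Then there exists δ ∈ Δ such that for every δ' ∈ Δ, for all sufficiently large X: D_{a,δ}(X) ≥ 1 and D_{a',δ'}(X) < e^{−X·s/2}·D_{a,δ}(X). -/

import Mathlib

open Filter Topology

/-- A dimension function: `D X b ≥ 1` for `X ≥ 1`, and monotone in `b` coordinatewise. -/
def IsDimFun (L : ℕ) (D : ℕ → (Fin (L + 1) → ℝ) → ℕ) : Prop :=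
  (∀ X : ℕ, 1 ≤ X → ∀ b : Fin (L + 1) → ℝ, 1 ≤ D X b) ∧
  (∀ X : ℕ, ∀ b c : Fin (L + 1) → ℝ, (∀ i, b i ≤ c i) → D X b ≤ D X c)

/-- Membership in `Δ`: a positive sequence tending to `0`. -/
def IsDelta (δ : ℕ → ℝ) : Prop :=
  (∀ X : ℕ, 0 < δ X) ∧ Tendsto δ atTop (nhds 0)

/-- The shell dimension `D_{a,δ}(X)`. -/
def shellDim (L : ℕ) (D : ℕ → (Fin (L + 1) → ℝ) → ℕ) (a : Fin (L + 1) → ℝ)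
    (δ : ℕ → ℝ) (X : ℕ) : ℕ :=
  D X (fun i => (1 + δ X) * a i) - D X (fun i => (1 - δ X) * a i)

/-- The regularized Boltzmann entropy hypothesis: `S` is continuous and
`(1/X) log (D X b) → S b` for every `b > 0`. -/
def RegBoltz (L : ℕ) (D : ℕ → (Fin (L + 1) → ℝ) → ℕ) (S : (Fin (L + 1) → ℝ) → ℝ) : Prop :=
  Continuous S ∧
  ∀ b : Fin (L + 1) → ℝ, (∀ i, 0 < b i) →
    Tendsto (fun X : ℕ => Real.log (D X b) / X) atTop (nhds (S b))

/-- `S` is strictly increasing in each coordinate on the positive orthant. -/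
def StrictInc (L : ℕ) (S : (Fin (L + 1) → ℝ) → ℝ) : Prop :=
  ∀ b c : Fin (L + 1) → ℝ, (∀ i, 0 < b i) → (∀ i, 0 < c i) →
    (∀ i, b i ≤ c i) → b ≠ c → S b < S c

/-- `S̄(a)`: sup over `δ ∈ Δ` of the limsup of `(1/X) log D_{a,δ}(X)`, in the extended reals. -/
noncomputable def SbarSup (L : ℕ) (D : ℕ → (Fin (L + 1) → ℝ) → ℕ) (a : Fin (L + 1) → ℝ) : EReal :=
  ⨆ δ : {δ : ℕ → ℝ // IsDelta δ},
    Filter.limsup (fun X : ℕ => ((Real.log (shellDim L D a δ.1 X) / X : ℝ) : EReal)) atTop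

/-- `S̲(a)`: sup over `δ ∈ Δ` of the liminf of `(1/X) log D_{a,δ}(X)`, in the extended reals. -/
noncomputable def SbarInf (L : ℕ) (D : ℕ → (Fin (L + 1) → ℝ) → ℕ) (a : Fin (L + 1) → ℝ) : EReal :=
  ⨆ δ : {δ : ℕ → ℝ // IsDelta δ},
    Filter.liminf (fun X : ℕ => ((Real.log (shellDim L D a δ.1 X) / X : ℝ) : EReal)) atTop

/-- Total variation distance between the distribution `q` on `ℕ` and the uniform
distribution on `{0, …, d-1}`. -/
noncomputable def TVu (q : ℕ → ℝ) (d : ℕ) : ℝ :=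
  (1 / 2) * (∑ i ∈ Finset.range d, |q i - 1 / (d : ℝ)|) + (1 / 2) * (∑' i : ℕ, q (i + d))

/-!
Pick `δ` so that the inner region `(1 - δ X) • a` still carries at most half of `D X a`; then the
shell around `a` has dimension at least `D X a / 2 ≈ exp (X S̃ a)`. This is possible for a single
`δ → 0` by a diagonal argument, since for each fixed `η ∈ (0, 1)` strict monotonicity gives
`S̃ ((1 - η) • a) < S̃ a`, hence `D X ((1 - η) • a) = o (D X a)`. On the other side, the shell around
`a'` lies inside `(1 + η) • a'` for any fixed `η > 0` once `δ' X ≤ η`, and by continuity of `S̃` that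
region has growth rate below `S̃ a' + s / 4`.
-/

open Real

theorem eventually_lt_exp_of_tendsto_log_div {u : ℕ → ℝ} {α t : ℝ}
    (hu : Tendsto (fun n : ℕ => log (u n) / n) atTop (𝓝 α)) (ht : α < t) :
    ∀ᶠ n : ℕ in atTop, u n < exp (t * n) := by
  filter_upwards [hu.eventually (eventually_lt_nhds ht), eventually_gt_atTop 0] with n hn hn0
  rcases le_or_gt (u n) 0 with hun | hun
  · exact hun.trans_lt (exp_pos _)
  · rwa [← log_lt_iff_lt_exp hun, ← div_lt_iff₀ (by exact_mod_cast hn0)]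

theorem eventually_exp_lt_of_tendsto_log_div {u : ℕ → ℝ} {α t : ℝ}
    (hu : Tendsto (fun n : ℕ => log (u n) / n) atTop (𝓝 α)) (hpos : ∀ᶠ n in atTop, 0 < u n)
    (ht : t < α) :
    ∀ᶠ n : ℕ in atTop, exp (t * n) < u n := by
  filter_upwards [hu.eventually (eventually_gt_nhds ht), eventually_gt_atTop 0, hpos]
    with n hn hn0 hun
  rwa [← lt_log_iff_exp_lt hun, ← lt_div_iff₀ (by exact_mod_cast hn0)]

theorem eventually_mul_exp_mul_lt {u v : ℕ → ℝ} {α β γ c : ℝ}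
    (hu : Tendsto (fun n : ℕ => log (u n) / n) atTop (𝓝 α))
    (hv : Tendsto (fun n : ℕ => log (v n) / n) atTop (𝓝 β)) (hvpos : ∀ᶠ n in atTop, 0 < v n)
    (hc : 0 < c) (h : α + γ < β) :
    ∀ᶠ n : ℕ in atTop, c * exp (γ * n) * u n < v n := by
  obtain ⟨ε, hε, rfl⟩ : ∃ ε, 0 < ε ∧ β = α + γ + 3 * ε :=
    ⟨(β - α - γ) / 3, by linarith, by ring⟩
  have hcε : ∀ᶠ n : ℕ in atTop, c ≤ exp (ε * n) :=
    (tendsto_exp_atTop.comp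
      (tendsto_natCast_atTop_atTop.const_mul_atTop hε)).eventually_ge_atTop c
  filter_upwards [eventually_lt_exp_of_tendsto_log_div hu (lt_add_of_pos_right α hε),
    eventually_exp_lt_of_tendsto_log_div hv hvpos (sub_lt_self _ hε), hcε] with n hun hvn hcn
  calc c * exp (γ * n) * u n < c * exp (γ * n) * exp ((α + ε) * n) := by gcongr
    _ ≤ exp (ε * n) * exp (γ * n) * exp ((α + ε) * n) := by gcongr
    _ = exp ((α + γ + 3 * ε - ε) * n) := by rw [← exp_add, ← exp_add]; ring_nf
    _ < v n := hvn

theorem Filter.exists_tendsto_atTop_eventually_diag {P : ℕ → ℕ → Prop}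
    (h : ∀ᶠ k in atTop, ∀ᶠ n in atTop, P k n) :
    ∃ c : ℕ → ℕ, Tendsto c atTop atTop ∧ ∀ᶠ n in atTop, P (c n) n := by
  obtain ⟨K, hK⟩ := eventually_atTop.1 h
  have hQ : ∀ k, ∃ N, ∀ m ≥ N, K ≤ k → ∀ n ≥ m, P k n := by
    intro k
    by_cases hk : K ≤ k
    · obtain ⟨N, hN⟩ := eventually_atTop.1 (hK k hk)
      exact ⟨N, fun m hm _ n hn => hN n (hm.trans hn)⟩
    · exact ⟨0, fun _ _ hk' => absurd hk' hk⟩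
  obtain ⟨φ, hφ, hφP⟩ := extraction_forall_of_eventually' hQ
  -- `c n` is the largest index whose threshold `φ (c n)` has already been passed at time `n`.
  refine ⟨fun n => Nat.findGreatest (fun k => φ k ≤ n) n, ?_, ?_⟩
  · exact tendsto_atTop_atTop.2 fun k =>
      ⟨φ k, fun n hn => Nat.le_findGreatest ((hφ.id_le k).trans hn) hn⟩
  · filter_upwards [eventually_ge_atTop (φ K)] with n hn
    have hKn : K ≤ n := (hφ.id_le K).trans hn
    exact hφP _ (Nat.le_findGreatest hKn hn) n
      (Nat.findGreatest_spec (P := fun k => φ k ≤ n) hKn hn)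

theorem exists_isDelta_eventually {P : ℝ → ℕ → Prop}
    (h : ∀ᶠ η in 𝓝[>] 0, ∀ᶠ n in atTop, P η n) :
    ∃ δ, IsDelta δ ∧ ∀ᶠ n in atTop, P (δ n) n := by
  have hη : Tendsto (fun k : ℕ => 1 / ((k : ℝ) + 1)) atTop (𝓝[>] 0) :=
    tendsto_nhdsWithin_iff.2
      ⟨tendsto_one_div_add_atTop_nhds_zero_nat, Eventually.of_forall fun k => by
        rw [Set.mem_Ioi]; positivity⟩
  obtain ⟨c, hc, hcP⟩ := exists_tendsto_atTop_eventually_diag (hη.eventually h)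
  exact ⟨fun n => 1 / ((c n : ℝ) + 1),
    ⟨fun n => by positivity, tendsto_one_div_add_atTop_nhds_zero_nat.comp hc⟩, hcP⟩

section Dimension

variable {L : ℕ} {D : ℕ → (Fin (L + 1) → ℝ) → ℕ} {S : (Fin (L + 1) → ℝ) → ℝ}

theorem IsDimFun.eventually_cast_pos (hD : IsDimFun L D) (b : Fin (L + 1) → ℝ) :
    ∀ᶠ X in atTop, (0 : ℝ) < D X b :=
  (eventually_ge_atTop 1).mono fun X hX => Nat.cast_pos.2 (hD.1 X hX b)

theorem StrictInc.apply_mul_lt (hSI : StrictInc L S) {a : Fin (L + 1) → ℝ} (ha : ∀ i, 0 < a i)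
    {t : ℝ} (ht₀ : 0 < t) (ht₁ : t < 1) :
    S (fun i => t * a i) < S a := by
  refine hSI _ _ (fun i => mul_pos ht₀ (ha i)) ha (fun i => by nlinarith [ha i]) fun h => ?_
  have h0 := congrFun h 0
  nlinarith [ha 0]

theorem RegBoltz.eventually_two_mul_le (hD : IsDimFun L D) (hS : RegBoltz L D S)
    {b c : Fin (L + 1) → ℝ} (hb : ∀ i, 0 < b i) (hc : ∀ i, 0 < c i) (hlt : S b < S c) :
    ∀ᶠ X in atTop, 2 * D X b ≤ D X c := by
  filter_upwards [eventually_mul_exp_mul_lt (γ := 0) (hS.2 b hb) (hS.2 c hc)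
    (hD.eventually_cast_pos c) two_pos (by simpa using hlt)] with X hX
  simp only [zero_mul, exp_zero, mul_one] at hX
  exact_mod_cast hX.le

theorem RegBoltz.eventually_two_mul_one_sub_mul_le (hD : IsDimFun L D) (hS : RegBoltz L D S)
    (hSI : StrictInc L S) {a : Fin (L + 1) → ℝ} (ha : ∀ i, 0 < a i) :
    ∀ᶠ η in 𝓝[>] 0, ∀ᶠ X in atTop, 2 * D X (fun i => (1 - η) * a i) ≤ D X a := by
  filter_upwards [Ioo_mem_nhdsGT one_pos] with η ⟨hη₀, hη₁⟩
  exact hS.eventually_two_mul_le hD (fun i => mul_pos (by linarith) (ha i)) ha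
    (hSI.apply_mul_lt ha (by linarith) (by linarith))

theorem IsDimFun.le_two_mul_shellDim (hD : IsDimFun L D) {a : Fin (L + 1) → ℝ}
    (ha : ∀ i, 0 ≤ a i) {δ : ℕ → ℝ} {X : ℕ} (hδ : 0 ≤ δ X)
    (h : 2 * D X (fun i => (1 - δ X) * a i) ≤ D X a) :
    D X a ≤ 2 * shellDim L D a δ X := by
  have : D X a ≤ D X (fun i => (1 + δ X) * a i) := hD.2 X _ _ fun i => by nlinarith [ha i]
  unfold shellDim
  omega

theorem IsDimFun.shellDim_le_one_add_mul (hD : IsDimFun L D) {a : Fin (L + 1) → ℝ}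
    (ha : ∀ i, 0 ≤ a i) {δ : ℕ → ℝ} {X : ℕ} {η : ℝ} (h : δ X ≤ η) :
    shellDim L D a δ X ≤ D X (fun i => (1 + η) * a i) :=
  (Nat.sub_le _ _).trans (hD.2 X _ _ fun i => mul_le_mul_of_nonneg_right (by linarith) (ha i))

end Dimension

/-- If `S̃ a > S̃ a'` with gap `s`, some `δ ∈ Δ` makes every target shell dimension
exponentially smaller than the initial one. -/
theorem stmt_3 {L : ℕ} (D : ℕ → (Fin (L + 1) → ℝ) → ℕ) (S : (Fin (L + 1) → ℝ) → ℝ)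
    (hD : IsDimFun L D) (hS : RegBoltz L D S) (hSI : StrictInc L S)
    (a a' : Fin (L + 1) → ℝ) (ha : ∀ i, 0 < a i) (ha' : ∀ i, 0 < a' i)
    (s : ℝ) (hs : s = S a - S a') (hpos : 0 < s) :
    ∃ δ : ℕ → ℝ, IsDelta δ ∧ ∀ δ' : ℕ → ℝ, IsDelta δ' →
      ∃ X₀ : ℕ, ∀ X ≥ X₀,
        1 ≤ shellDim L D a δ X ∧
        (shellDim L D a' δ' X : ℝ) <
          Real.exp (-(X : ℝ) * s / 2) * (shellDim L D a δ X : ℝ) := by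
  obtain ⟨δ, hδ, hhalf⟩ :=
    exists_isDelta_eventually (hS.eventually_two_mul_one_sub_mul_le hD hSI ha)
  refine ⟨δ, hδ, fun δ' hδ' => ?_⟩
  have hcont : Tendsto (fun η : ℝ => S (fun i => (1 + η) * a' i)) (𝓝 0) (𝓝 (S a')) := by
    have h :=
      (hS.1.comp (by fun_prop : Continuous fun η : ℝ => fun i => (1 + η) * a' i)).tendsto 0
    simpa only [Function.comp_def, add_zero, one_mul] using h
  obtain ⟨η, hηS, hη⟩ : ∃ η, S (fun i => (1 + η) * a' i) < S a' + s / 4 ∧ 0 < η :=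
    (((hcont.eventually (eventually_lt_nhds (by linarith))).filter_mono nhdsWithin_le_nhds).and
      (self_mem_nhdsWithin (s := Set.Ioi 0))).exists
  have hgrowth := eventually_mul_exp_mul_lt (γ := s / 2)
    (hS.2 (fun i => (1 + η) * a' i) fun i => mul_pos (by linarith) (ha' i)) (hS.2 a ha)
    (hD.eventually_cast_pos a) two_pos (by linarith)
  obtain ⟨X₀, hX₀⟩ := eventually_atTop.1 (hhalf.and (hgrowth.and
    ((hδ'.2.eventually (eventually_lt_nhds hη)).and (eventually_ge_atTop 1))))
  refine ⟨X₀, fun X hX => ?_⟩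
  obtain ⟨hhalfX, hgrowthX, hδ'X, hX1⟩ := hX₀ X hX
  have hshell := hD.le_two_mul_shellDim (fun i => (ha i).le) (hδ.1 X).le hhalfX
  have hshell' := hD.shellDim_le_one_add_mul (fun i => (ha' i).le) hδ'X.le (δ := δ')
  refine ⟨by have := hD.1 X hX1 a; omega, ?_⟩
  have hshellR : (D X a : ℝ) ≤ 2 * shellDim L D a δ X := by exact_mod_cast hshell
  calc (shellDim L D a' δ' X : ℝ) ≤ D X (fun i => (1 + η) * a' i) := by exact_mod_cast hshell'
    _ = exp (-(X : ℝ) * s / 2) * (exp (s / 2 * X) * D X (fun i => (1 + η) * a' i)) := by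
      rw [← mul_assoc, ← exp_add]; ring_nf; simp
    _ < exp (-(X : ℝ) * s / 2) * shellDim L D a δ X := by gcongr; linarith
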